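/- As real z → ∞, r̃(1, 2z/(z-1)², z) is asymptotically equivalent to (1/2)e^z; equivalently, since r̃(1, 2z/(z-1)², z) = e^z · Γ(z,z)/Γ(z), the ratio Γ(z,z)/Γ(z) tends to 1/2 as z → ∞ along the reals. -/

import Mathlib

open Filter Asymptotics

/-- The upper incomplete gamma function `Γ(z,x) = ∫_x^∞ t^{z-1} e^{-t} dt`. -/
noncomputable def upperGamma (z x : ℝ) : ℝ :=
  ∫ t in Set.Ioi x, t ^ (z - 1) * Real.exp (-t)

/-!
Laplace's method. With `z = w²` and `t = w² + w s`, the integrand `t^{z-1} e^{-t}` is, up to a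
factor independent of `s`, `exp (gammaExponent w s)`; this tends to `exp (-s²/2)` as `w → ∞` and
is dominated by `exp (2 - |s|/4)` for `w ≥ 2`. `Γ(z,z)` integrates over `s > 0` and `Γ(z)` over
`s > -w`, so their ratio tends to the half Gaussian integral over the full one.
-/

open Set Topology MeasureTheory Real

namespace Real

lemma log_one_add_le_of_nonneg {u : ℝ} (hu : 0 ≤ u) :
    log (1 + u) ≤ u - u ^ 2 / (2 * (1 + u)) := by
  have hpos : 0 < 1 + u := by linarith
  calc log (1 + u) ≤ sinh (log (1 + u)) := self_le_sinh_iff.mpr (log_nonneg (by linarith))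
    _ = u - u ^ 2 / (2 * (1 + u)) := by
      rw [sinh_log hpos]
      field_simp
      ring

lemma log_one_add_le_of_nonpos {u : ℝ} (hu₁ : -1 < u) (hu : u ≤ 0) :
    log (1 + u) ≤ u - u ^ 2 / 2 := by
  have hu' : |-u| < 1 := by rw [abs_neg, abs_of_nonpos hu]; linarith
  have h := sum_le_hasSum (Finset.range 2)
    (fun n _ => div_nonneg (pow_nonneg (neg_nonneg.mpr hu) _) (by positivity))
    (hasSum_pow_div_log_of_abs_lt_one hu')
  norm_num [Finset.sum_range_succ] at h
  linarith

lemma abs_log_one_add_sub_le {x : ℝ} (hx : |x| ≤ 1 / 2) :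
    |log (1 + x) - (x - x ^ 2 / 2)| ≤ 2 * |x| ^ 3 := by
  have h := abs_log_sub_add_sum_range_le (x := -x) (by rw [abs_neg]; linarith) 2
  norm_num [Finset.sum_range_succ] at h
  calc |log (1 + x) - (x - x ^ 2 / 2)| = |-x + x ^ 2 / 2 + log (1 + x)| := by ring_nf
    _ ≤ |x| ^ 3 / (1 - |x|) := h
    _ ≤ 2 * |x| ^ 3 := by
        rw [div_le_iff₀ (by linarith)]
        nlinarith [pow_nonneg (abs_nonneg x) 3]

end Real

/-- `log` of `t^{w²-1} e^{-t}` at `t = w² + w s`, minus its value at the peak `t = w²`. -/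
noncomputable def gammaExponent (w s : ℝ) : ℝ :=
  (w ^ 2 - 1) * log (1 + s / w) - w * s

lemma gammaExponent_le {w s : ℝ} (hw : 2 ≤ w) (hs : -w < s) :
    gammaExponent w s ≤ 2 - |s| / 4 := by
  have hw₀ : 0 < w := by linarith
  obtain ⟨u, hu⟩ : ∃ u, u = s / w := ⟨_, rfl⟩
  have hsu : s = w * u := by rw [hu]; field_simp
  have hu₁ : -1 < u := by rw [hu, lt_div_iff₀ hw₀]; linarith
  have hw₁ : 0 ≤ w ^ 2 - 1 := by nlinarith
  have hquad : s ^ 2 / 2 ≤ (w ^ 2 - 1) * u ^ 2 := by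
    rw [hsu]; nlinarith [mul_nonneg (sq_nonneg u) (by nlinarith : 0 ≤ w ^ 2 - 2)]
  have hE : gammaExponent w s = (w ^ 2 - 1) * log (1 + u) - w ^ 2 * u := by
    rw [gammaExponent, ← hu, hsu]; ring
  rw [hE]
  rcases le_or_gt 0 s with hs₀ | hs₀
  · have hu₀ : 0 ≤ u := by rw [hu]; positivity
    have hus : u ≤ s := by rw [hsu]; nlinarith
    have hlog := mul_le_mul_of_nonneg_left (log_one_add_le_of_nonneg hu₀) hw₁
    have hdecay : (s ^ 2 / 2) / (2 * (1 + s)) ≤ (w ^ 2 - 1) * (u ^ 2 / (2 * (1 + u))) :=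
      calc (s ^ 2 / 2) / (2 * (1 + s)) ≤ (s ^ 2 / 2) / (2 * (1 + u)) := by gcongr
        _ ≤ (w ^ 2 - 1) * (u ^ 2 / (2 * (1 + u))) := by rw [← mul_div_assoc]; gcongr
    have hlin : -(2 - s / 4) ≤ (s ^ 2 / 2) / (2 * (1 + s)) := by
      rw [le_div_iff₀ (by positivity)]; nlinarith
    rw [abs_of_nonneg hs₀]
    nlinarith
  · have hu₀ : u ≤ 0 := by rw [hu]; exact (div_neg_of_neg_of_pos hs₀ hw₀).le
    have hsu' : s ≤ u := by rw [hsu]; nlinarith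
    have hlog := mul_le_mul_of_nonneg_left (log_one_add_le_of_nonpos hu₁ hu₀) hw₁
    rw [abs_of_neg hs₀]
    nlinarith

lemma tendsto_gammaExponent (s : ℝ) :
    Tendsto (gammaExponent · s) atTop (𝓝 (-(1 / 2) * s ^ 2)) := by
  have hsw : Tendsto (fun w : ℝ => s / w) atTop (𝓝 0) := tendsto_const_nhds.div_atTop tendsto_id
  have hlog : Tendsto (fun w : ℝ => log (1 + s / w)) atTop (𝓝 0) := by
    have h : Tendsto (fun w : ℝ => 1 + s / w) atTop (𝓝 1) := by simpa using hsw.const_add 1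
    simpa using h.log one_ne_zero
  have hrem : Tendsto (fun w : ℝ => w ^ 2 * (log (1 + s / w) - (s / w - (s / w) ^ 2 / 2)))
      atTop (𝓝 0) := by
    refine squeeze_zero_norm' ?_ ((tendsto_const_nhds (x := 2 * |s| ^ 3)).div_atTop tendsto_id)
    filter_upwards [eventually_ge_atTop (2 * |s|), eventually_gt_atTop 0] with w hw hw₀
    have hx : |s / w| ≤ 1 / 2 := by
      rw [abs_div, abs_of_pos hw₀, div_le_iff₀ hw₀]; linarith
    calc ‖w ^ 2 * (log (1 + s / w) - (s / w - (s / w) ^ 2 / 2))‖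
        ≤ w ^ 2 * (2 * |s / w| ^ 3) := by
          rw [norm_mul, norm_of_nonneg (sq_nonneg w)]
          exact mul_le_mul_of_nonneg_left (abs_log_one_add_sub_le hx) (sq_nonneg w)
      _ = 2 * |s| ^ 3 / w := by
          rw [abs_div, abs_of_pos hw₀]; field_simp
  have := (hrem.sub hlog).add_const (-(1 / 2) * s ^ 2)
  rw [sub_zero, zero_add] at this
  refine this.congr' ?_
  filter_upwards [eventually_gt_atTop 0] with w hw₀
  rw [gammaExponent]
  field_simp
  ring

lemma integral_Ioi_comp_add_mul {E : Type*} [NormedAddCommGroup E] [NormedSpace ℝ E]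
    (f : ℝ → E) (a c : ℝ) {w : ℝ} (hw : 0 < w) :
    ∫ s in Ioi a, f (c + w * s) = w⁻¹ • ∫ t in Ioi (c + w * a), f t := by
  rw [integral_comp_mul_left_Ioi (fun y => f (c + y)) a hw]
  congr 1
  simpa using (measurePreserving_add_left volume c).setIntegral_preimage_emb
    (measurableEmbedding_addLeft c) f (Ioi (c + w * a))

lemma rpow_mul_exp_neg_eq {w s : ℝ} (hw : 0 < w) (hs : -w < s) :
    (w ^ 2 + w * s) ^ (w ^ 2 - 1) * exp (-(w ^ 2 + w * s))
      = (w ^ 2) ^ (w ^ 2 - 1) * exp (-w ^ 2) * exp (gammaExponent w s) := by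
  have hu : 0 < 1 + s / w := by
    have : -1 < s / w := by rw [lt_div_iff₀ hw]; linarith
    linarith
  have hfac : w ^ 2 + w * s = w ^ 2 * (1 + s / w) := by field_simp
  rw [hfac, mul_rpow (by positivity) hu.le, rpow_def_of_pos hu, gammaExponent]
  rw [← hfac, mul_assoc, mul_assoc, ← exp_add, ← exp_add]
  congr 2
  ring

lemma integral_Ioi_rpow_mul_exp_neg_eq {w a : ℝ} (hw : 0 < w) (ha : 0 ≤ a) :
    ∫ t in Ioi a, t ^ (w ^ 2 - 1) * exp (-t)
      = w * (w ^ 2) ^ (w ^ 2 - 1) * exp (-w ^ 2)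
          * ∫ s in Ioi ((a - w ^ 2) / w), exp (gammaExponent w s) := by
  set b := (a - w ^ 2) / w
  have hb : -w ≤ b := by
    rw [le_div_iff₀ hw]; nlinarith
  have hcv := integral_Ioi_comp_add_mul (fun t => t ^ (w ^ 2 - 1) * exp (-t)) b (w ^ 2) hw
  rw [mul_div_cancel₀ _ hw.ne', add_sub_cancel, smul_eq_mul,
    setIntegral_congr_fun measurableSet_Ioi
      fun s hs => rpow_mul_exp_neg_eq hw (hb.trans_lt hs), integral_const_mul] at hcv
  field_simp at hcv ⊢
  linarith

lemma upperGamma_sq_div_Gamma_sq {w : ℝ} (hw : 0 < w) :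
    upperGamma (w ^ 2) (w ^ 2) / Gamma (w ^ 2)
      = (∫ s in Ioi 0, exp (gammaExponent w s)) / ∫ s in Ioi (-w), exp (gammaExponent w s) := by
  have hΓ : Gamma (w ^ 2) = ∫ t in Ioi 0, t ^ (w ^ 2 - 1) * exp (-t) := by
    simp_rw [Gamma_eq_integral (by positivity : 0 < w ^ 2), mul_comm (exp _)]
  rw [upperGamma, hΓ, integral_Ioi_rpow_mul_exp_neg_eq hw (sq_nonneg w),
    integral_Ioi_rpow_mul_exp_neg_eq hw le_rfl, sub_self, zero_div, zero_sub,
    neg_div, sq, mul_div_cancel_left₀ _ hw.ne', mul_div_mul_left _ _ (by positivity)]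

lemma integrable_exp_neg_mul_abs {c : ℝ} (hc : 0 < c) :
    Integrable fun s : ℝ => exp (-c * |s|) := by
  refine (by fun_prop : Continuous fun s : ℝ => exp (-c * |s|)).locallyIntegrable
    |>.integrable_of_isBigO_atTop_of_norm_isNegInvariant (g := fun s => exp (-c * s)) ?_ ?_ ?_
  · exact Eventually.of_forall fun s => by simp
  · refine EventuallyEq.isBigO ?_
    filter_upwards [eventually_ge_atTop 0] with s hs
    rw [abs_of_nonneg hs]
  · exact ⟨Ioi 0, Ioi_mem_atTop 0, exp_neg_integrableOn_Ioi 0 hc⟩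

lemma tendsto_integral_exp_gammaExponent {c : ℝ → ℝ} {S : Set ℝ} (hS : MeasurableSet S)
    (hc : ∀ᶠ w in atTop, -w ≤ c w) (hcS : ∀ s, ∀ᶠ w in atTop, c w < s ↔ s ∈ S) :
    Tendsto (fun w => ∫ s in Ioi (c w), exp (gammaExponent w s)) atTop
      (𝓝 (∫ s in S, exp (-(1 / 2) * s ^ 2))) := by
  simp_rw [← integral_indicator measurableSet_Ioi, ← integral_indicator hS]
  refine tendsto_integral_filter_of_dominated_convergence (fun s => exp (2 - |s| / 4)) ?_ ?_ ?_ ?_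
  · refine Eventually.of_forall fun w =>
      (Measurable.indicator ?_ measurableSet_Ioi).aestronglyMeasurable
    unfold gammaExponent
    fun_prop
  · filter_upwards [hc, eventually_ge_atTop 2] with w hcw hw
    refine Eventually.of_forall fun s => ?_
    by_cases hs : s ∈ Ioi (c w)
    · rw [indicator_of_mem hs, norm_of_nonneg (exp_nonneg _)]
      exact exp_le_exp.mpr (gammaExponent_le hw (hcw.trans_lt hs))
    · rw [indicator_of_notMem hs, norm_zero]
      positivity
  · refine ((integrable_exp_neg_mul_abs (by norm_num : (0 : ℝ) < 1 / 4)).const_mul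
      (exp 2)).congr (Eventually.of_forall fun s => ?_)
    simp only [← exp_add]
    ring_nf
  · refine Eventually.of_forall fun s => ?_
    by_cases hsS : s ∈ S
    · rw [indicator_of_mem hsS]
      refine ((continuous_exp.tendsto _).comp (tendsto_gammaExponent s)).congr' ?_
      filter_upwards [hcS s] with w hw
      rw [indicator_of_mem (show s ∈ Ioi (c w) from hw.mpr hsS)]
      rfl
    · rw [indicator_of_notMem hsS]
      refine tendsto_const_nhds.congr' ?_
      filter_upwards [hcS s] with w hw
      rw [indicator_of_notMem (show s ∉ Ioi (c w) from mt hw.mp hsS)]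

lemma tendsto_upperGamma_sq_div_Gamma_sq :
    Tendsto (fun w => upperGamma (w ^ 2) (w ^ 2) / Gamma (w ^ 2)) atTop (𝓝 (1 / 2)) := by
  have hright := tendsto_integral_exp_gammaExponent (c := fun _ => 0) measurableSet_Ioi
    ((eventually_ge_atTop 0).mono fun w hw => neg_nonpos.mpr hw)
    fun s => Eventually.of_forall fun _ => Iff.rfl
  have hall := tendsto_integral_exp_gammaExponent (c := fun w => -w) MeasurableSet.univ
    (Eventually.of_forall fun _ => le_rfl)
    fun s => (eventually_gt_atTop (-s)).mono fun w hw => iff_of_true (by linarith) (mem_univ s)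
  rw [integral_gaussian_Ioi] at hright
  rw [setIntegral_univ, integral_gaussian] at hall
  have hπ : √(π / (1 / 2)) ≠ 0 := by positivity
  have hlim := hright.div hall hπ
  rw [div_div_cancel_left' hπ, inv_eq_one_div] at hlim
  refine hlim.congr' ?_
  filter_upwards [eventually_gt_atTop 0] with w hw
  rw [upperGamma_sq_div_Gamma_sq hw]
  rfl

theorem rtildeExt_asymp_half_exp :
    (fun z : ℝ => Real.exp z * upperGamma z z / Real.Gamma z) ~[atTop]
      (fun z : ℝ => (1 / 2) * Real.exp z) ∧
    Tendsto (fun z : ℝ => upperGamma z z / Real.Gamma z) atTop (nhds (1 / 2)) := by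
  have hratio : Tendsto (fun z : ℝ => upperGamma z z / Gamma z) atTop (𝓝 (1 / 2)) := by
    refine (tendsto_upperGamma_sq_div_Gamma_sq.comp tendsto_sqrt_atTop).congr' ?_
    filter_upwards [eventually_ge_atTop 0] with z hz
    simp only [Function.comp_apply, sq_sqrt hz]
  refine ⟨?_, hratio⟩
  have := ((isEquivalent_const_iff_tendsto (by norm_num)).mpr hratio).mul
    (IsEquivalent.refl (u := exp))
  convert this using 1
  · funext z
    simp only [Pi.mul_apply]
    ring
  · rfl
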